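/- For every natural number n and all integers m and t such that G_k ≠ 0 for every integer k with t−1 ≤ k ≤ n+t+3, one has ∑_{j=1}^n (−F_{m+2})^{n−j}·F_{m−3}^{j−1}·G_{j+t+m} / (G_{j+t−2}·G_{j+t−1}·G_{j+t}·G_{j+t+1}·G_{j+t+2}·G_{j+t+3}) = F_{m−3}^n / (5·G_{n+t−1}·G_{n+t}·G_{n+t+1}·G_{n+t+2}·G_{n+t+3}) − (−F_{m+2})^n / (5·G_{t−1}·G_t·G_{t+1}·G_{t+2}·G_{t+3}), where the sum and both fractions are taken in ℚ. -/

import Mathlib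

/-!
For a gibonacci sequence `G`, both `m ↦ 5 G(k+m)` and `m ↦ F(m+2) G(k+3) + F(m-3) G(k-2)` are
gibonacci and agree at `m = 0, 1`, so they coincide. Writing `u i = 1 / (5 G(i+t-1) ⋯ G(i+t+3))`,
this identity splits the `j`-th summand into
`(-F(m+2))^(n-j) F(m-3)^(j-1) (F(m-3) u j + F(m+2) u (j-1))`, and these terms telescope to
`F(m-3)^n u n - (-F(m+2))^n u 0`.
-/

open Finset

def IsGibonacci {R : Type*} [Add R] (G : ℤ → R) : Prop :=
  ∀ k : ℤ, G (k + 2) = G (k + 1) + G k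

namespace IsGibonacci

variable {R : Type*} [CommRing R] {G H : ℤ → R}

theorem comp_add_const (hG : IsGibonacci G) (c : ℤ) : IsGibonacci fun k => G (k + c) := by
  intro k
  simpa only [add_right_comm _ c] using hG (k + c)

theorem mul_const (hG : IsGibonacci G) (a : R) : IsGibonacci fun k => G k * a := by
  intro k
  simp only [hG k, add_mul]

theorem add (hG : IsGibonacci G) (hH : IsGibonacci H) : IsGibonacci fun k => G k + H k := by
  intro k
  simp only [hG k, hH k]
  ring

theorem ext (hG : IsGibonacci G) (hH : IsGibonacci H) (h0 : G 0 = H 0) (h1 : G 1 = H 1) :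
    G = H := by
  suffices ∀ k : ℤ, G k = H k ∧ G (k + 1) = H (k + 1) from funext fun k => (this k).1
  intro k
  induction k using Int.induction_on with
  | zero => exact ⟨h0, h1⟩
  | succ k ih =>
    refine ⟨ih.2, ?_⟩
    rw [add_assoc, one_add_one_eq_two, hG, hH, ih.1, ih.2]
  | pred k ih =>
    refine ⟨?_, by rw [sub_add_cancel, ih.1]⟩
    have hGk := hG (-k - 1)
    have hHk := hH (-k - 1)
    rw [show -(k : ℤ) - 1 + 2 = -k + 1 by ring, sub_add_cancel] at hGk hHk
    linear_combination hHk - hGk + ih.2 - ih.1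

theorem add_three (hG : IsGibonacci G) (k : ℤ) : G (k + 3) = 2 * G (k + 1) + G k := by
  have h := hG (k + 1)
  rw [add_assoc, show (1 : ℤ) + 2 = 3 by norm_num, add_assoc, one_add_one_eq_two, hG k] at h
  linear_combination h

theorem sub_two (hG : IsGibonacci G) (k : ℤ) : G (k - 2) = 2 * G k - G (k + 1) := by
  have h₁ := hG (k - 2)
  have h₂ := hG (k - 1)
  rw [sub_add_cancel, show k - 2 + 1 = k - 1 by ring] at h₁
  rw [show k - 1 + 2 = k + 1 by ring, sub_add_cancel] at h₂
  linear_combination h₂ - h₁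

theorem five_mul_eq_fib_mul_add_fib_mul {F : ℤ → R} (hF0 : F 0 = 0) (hF1 : F 1 = 1)
    (hF : IsGibonacci F) (hG : IsGibonacci G) (k m : ℤ) :
    5 * G (k + m) = F (m + 2) * G (k + 3) + F (m - 3) * G (k - 2) := by
  have hFm1 : F (-1) = 1 := by simpa [hF0, hF1] using (hF (-1)).symm
  have hF2 : F 2 = 1 := by simpa [hF0, hF1] using hF 0
  have hF3 : F 3 = 2 := by simpa [hF0, hF1] using hF.add_three 0
  have hFm2 : F (-2) = -1 := by simpa [hF0, hF1] using hF.sub_two 0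
  have hFm3 : F (-3) = 2 := by simpa [hF0, hFm1] using hF.sub_two (-1)
  have h := (hG.comp_add_const k |>.mul_const 5).ext
    (((hF.comp_add_const 2).mul_const (G (k + 3))).add
      ((hF.comp_add_const (-3)).mul_const (G (k - 2)))) ?_ ?_
  · simpa [mul_comm, add_comm, sub_eq_add_neg] using congrFun h m
  · norm_num [hF2, hFm3, hG.add_three, hG.sub_two]
    ring
  · norm_num [add_comm 1 k, hF3, hFm2, hG.add_three, hG.sub_two]
    ring

end IsGibonacci

theorem sum_range_neg_pow_mul_pow_mul_add {R : Type*} [CommRing R] (x y : R) (u : ℕ → R)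
    (n : ℕ) :
    ∑ i ∈ range n, (-y) ^ (n - (i + 1)) * x ^ i * (x * u (i + 1) + y * u i) =
      x ^ n * u n - (-y) ^ n * u 0 := by
  have h := sum_range_sub (fun i => (-y) ^ (n - i) * x ^ i * u i) n
  simp only [tsub_self, pow_zero, one_mul, tsub_zero, mul_one] at h
  rw [← h]
  refine sum_congr rfl fun i hi => ?_
  rw [show n - i = n - (i + 1) + 1 by have := mem_range.mp hi; omega]
  ring

section Field

variable {K : Type*} [Field K]

def windowInv (G : ℤ → K) (s : ℤ) : K :=
  (5 * G (s - 1) * G s * G (s + 1) * G (s + 2) * G (s + 3))⁻¹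

theorem div_prod_eq_windowInv_add {G : ℤ → K} {s : ℤ} {w b c : K} (h5 : (5 : K) ≠ 0)
    (hG : ∀ k, s - 2 ≤ k → k ≤ s + 3 → G k ≠ 0) (hw : 5 * w = c * G (s + 3) + b * G (s - 2)) :
    w / (G (s - 2) * G (s - 1) * G s * G (s + 1) * G (s + 2) * G (s + 3)) =
      b * windowInv G s + c * windowInv G (s - 1) := by
  have h₀ := hG (s - 2) le_rfl (by omega)
  have h₁ := hG (s - 1) (by omega) (by omega)
  have h₂ := hG s (by omega) (by omega)
  have h₃ := hG (s + 1) (by omega) (by omega)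
  have h₄ := hG (s + 2) (by omega) (by omega)
  have h₅ := hG (s + 3) (by omega) le_rfl
  rw [windowInv, windowInv, show s - 1 - 1 = s - 2 by ring, sub_add_cancel,
    show s - 1 + 2 = s + 1 by ring, show s - 1 + 3 = s + 2 by ring]
  field_simp
  linear_combination hw

end Field

theorem reciprocal_sum (F : ℤ → ℤ) (hF0 : F 0 = 0) (hF1 : F 1 = 1)
    (hF : ∀ k : ℤ, F (k + 2) = F (k + 1) + F k)
    (G : ℤ → ℤ) (hG : ∀ k : ℤ, G (k + 2) = G (k + 1) + G k) (n : ℕ) (m t : ℤ)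
    (hGnz : ∀ k : ℤ, t - 1 ≤ k → k ≤ (n : ℤ) + t + 3 → G k ≠ 0) :
    ∑ j ∈ Finset.Icc 1 n,
        ((((-F (m + 2)) ^ (n - j) * F (m - 3) ^ (j - 1) * G ((j : ℤ) + t + m) : ℤ) : ℚ) /
          ((G ((j : ℤ) + t - 2) : ℚ) * (G ((j : ℤ) + t - 1) : ℚ) * (G ((j : ℤ) + t) : ℚ) *
            (G ((j : ℤ) + t + 1) : ℚ) * (G ((j : ℤ) + t + 2) : ℚ) * (G ((j : ℤ) + t + 3) : ℚ))) =
      ((F (m - 3) ^ n : ℤ) : ℚ) /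
          (5 * (G ((n : ℤ) + t - 1) : ℚ) * (G ((n : ℤ) + t) : ℚ) * (G ((n : ℤ) + t + 1) : ℚ) *
            (G ((n : ℤ) + t + 2) : ℚ) * (G ((n : ℤ) + t + 3) : ℚ)) -
        (((-F (m + 2)) ^ n : ℤ) : ℚ) /
          (5 * (G (t - 1) : ℚ) * (G t : ℚ) * (G (t + 1) : ℚ) * (G (t + 2) : ℚ) * (G (t + 3) : ℚ)) := by
  rw [← Ico_add_one_right_eq_Icc, sum_Ico_eq_sum_range, add_tsub_cancel_right]
  convert sum_range_neg_pow_mul_pow_mul_add (F (m - 3) : ℚ) (F (m + 2))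
    (fun i => windowInv (fun k => (G k : ℚ)) (i + t)) n using 1
  · refine sum_congr rfl fun i hi => ?_
    rw [mem_range] at hi
    rw [Int.cast_mul, mul_div_assoc, div_prod_eq_windowInv_add (G := fun k => (G k : ℚ))
      (b := F (m - 3)) (c := F (m + 2)) (by norm_num)
      (fun k hk₁ hk₂ => Int.cast_ne_zero.mpr (hGnz k (by omega) (by omega)))
      (by exact_mod_cast IsGibonacci.five_mul_eq_fib_mul_add_fib_mul hF0 hF1 hF hG _ m),
      add_comm 1 i, add_tsub_cancel_right,
      show ((i + 1 : ℕ) : ℤ) + t - 1 = i + t by push_cast; ring]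
    push_cast
    ring
  · simp [windowInv, div_eq_mul_inv]
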